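/- arXiv:2202.02381 — 3 statements merged into one kernel-verified Lean document; each statement's English description precedes it below -/
import Mathlib

section
/- The linear map (x, y) ↦ (x, 2y − x) sends each pair ⟨i, y_i⟩ (for i ≥ 2) of the strange-root process for 2m to a Fagan pair of Fagan's construction started at (2, 2m); consequently the final value of Fagan's construction on m equals the strange root of 2m, i.e., cf(m) = sr(2m) for every positive integer m. -/
/-- The next value in the strange-root process: the least integer `z` with
`(i+1)*z > i*(y+1)`. -/
def srStep (i y : ℕ) : ℕ := i * (y + 1) / (i + 1) + 1

/-- `srY n i` is the second coordinate `y_i` of the `i`-th pair of the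
strange-root process started at `⟨1, n⟩` (indices start at 1). -/
def srY (n : ℕ) : ℕ → ℕ
  | 0 => n
  | 1 => n
  | (i+2) => srStep (i+1) (srY n (i+1))

/-- The strange root of `n`: the first index `r ≥ 1` with `y_r ≤ r`. -/
noncomputable def sr (n : ℕ) : ℕ := sInf {r | 1 ≤ r ∧ srY n r ≤ r}

/-- The next value in Fagan's construction: the least integer `z` with
`(i+1)*z > i*a` and `i+1+z` even. -/
def fStep (i a : ℕ) : ℕ :=
  let z := i * a / (i + 1) + 1
  if (i + 1 + z) % 2 = 0 then z else z + 1

/-- `faganA m i` is the second coordinate `a_i` of the `i`-th Fagan pair of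
Fagan's construction started at `(2, 2m)` (indices start at 2). -/
def faganA (m : ℕ) : ℕ → ℕ
  | 0 => 2 * m
  | 1 => 2 * m
  | 2 => 2 * m
  | (i+3) => fStep (i+2) (faganA m (i+2))

/-- `cf m` is the common value of the final Fagan pair. -/
noncomputable def cf (m : ℕ) : ℕ := faganA m (sInf {i | 2 ≤ i ∧ faganA m i ≤ i})

lemma srStep_le {i y : ℕ} (h : i < y) : srStep i y ≤ y := by
  unfold srStep
  have : i * (y + 1) / (i + 1) < y := by
    rw [Nat.div_lt_iff_lt_mul (by omega)]
    nlinarith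
  omega

lemma srStep_ge {i y : ℕ} (h : i + 1 ≤ y) : i + 1 ≤ srStep i y := by
  unfold srStep
  have : i ≤ i * (y + 1) / (i + 1) := by
    rw [Nat.le_div_iff_mul_le (by omega)]
    nlinarith
  omega

lemma fStep_eq_of (i a T : ℕ) (hT2 : 2 ≤ T) (hpar : (i + 1 + T) % 2 = 0)
    (hub : i * a < (i + 1) * T) (hlb : (i + 1) * (T - 2) ≤ i * a) :
    fStep i a = T := by
  unfold fStep
  set d := i * a / (i + 1) with hd
  have hdm : (i + 1) * d + i * a % (i + 1) = i * a := Nat.div_add_mod (i * a) (i + 1)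
  have hmlt : i * a % (i + 1) < i + 1 := Nat.mod_lt _ (by omega)
  have h1 : d < T := by
    have : (i + 1) * d < (i + 1) * T := by omega
    exact Nat.lt_of_mul_lt_mul_left this
  have h2 : T - 2 < d + 1 := by
    have : (i + 1) * (T - 2) < (i + 1) * (d + 1) := by
      have : i * a < (i + 1) * (d + 1) := by
        have e : (i + 1) * (d + 1) = (i + 1) * d + (i + 1) := by ring
        omega
      omega
    exact Nat.lt_of_mul_lt_mul_left this
  simp only []
  split_ifs with hp
  · omega
  · omega

lemma step_lemma (i y : ℕ) (hi : 2 ≤ i) (hy : i ≤ y) :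
    fStep i (2 * y - i) = 2 * srStep i y - (i + 1) := by
  have hq1 : (i + 1) * (i * (y + 1) / (i + 1)) ≤ i * (y + 1) := Nat.mul_div_le _ _
  have hq2 : i * (y + 1) < (i + 1) * (i * (y + 1) / (i + 1) + 1) := by
    have hdm := Nat.div_add_mod (i * (y + 1)) (i + 1)
    have hmlt : i * (y + 1) % (i + 1) < i + 1 := Nat.mod_lt _ (by omega)
    have e : (i + 1) * (i * (y + 1) / (i + 1) + 1)
        = (i + 1) * (i * (y + 1) / (i + 1)) + (i + 1) := by ring
    omega
  set q := i * (y + 1) / (i + 1) with hqdef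
  have hqi : i ≤ q := by
    rw [hqdef, Nat.le_div_iff_mul_le (by omega)]
    nlinarith
  have hsr : srStep i y = q + 1 := rfl
  rw [hsr]
  obtain ⟨a, ha⟩ : ∃ a, a + i = 2 * y := ⟨2 * y - i, by omega⟩
  rw [show 2 * y - i = a from by omega]
  obtain ⟨T, hT⟩ : ∃ T, T + (i + 1) = 2 * (q + 1) := ⟨2 * (q + 1) - (i + 1), by omega⟩
  rw [show 2 * (q + 1) - (i + 1) = T from by omega]
  have e1 : i * (a + i) = i * (2 * y) := by rw [ha]
  have e2 : (i + 1) * (T + (i + 1)) = (i + 1) * (2 * (q + 1)) := by rw [hT]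
  apply fStep_eq_of
  · omega
  · omega
  · nlinarith
  · obtain ⟨T2, hT2⟩ : ∃ T2, T2 + 2 = T := ⟨T - 2, by omega⟩
    rw [show T - 2 = T2 from by omega]
    have e3 : (i + 1) * (T2 + 2) = (i + 1) * T := by rw [hT2]
    nlinarith

lemma srY_succ (n k : ℕ) (hk : 1 ≤ k) : srY n (k + 1) = srStep k (srY n k) := by
  match k, hk with
  | (k' + 1), _ => rfl

lemma faganA_succ (m k : ℕ) (hk : 2 ≤ k) : faganA m (k + 1) = fStep k (faganA m k) := by
  match k, hk with
  | (k' + 2), _ => rfl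

lemma exists_term (n : ℕ) (hn : 1 ≤ n) : ∃ r, 1 ≤ r ∧ srY n r ≤ r := by
  have key : ∀ r, 1 ≤ r → srY n r ≤ n ∨ ∃ j, 1 ≤ j ∧ j ≤ r ∧ srY n j ≤ j := by
    intro r
    induction r with
    | zero => omega
    | succ k ih =>
      intro _
      by_cases hk : 1 ≤ k
      · rcases ih hk with h | ⟨j, hj⟩
        · by_cases hle : srY n k ≤ k
          · exact Or.inr ⟨k, hk, by omega, hle⟩
          · left
            rw [srY_succ n k hk]
            exact le_trans (srStep_le (by omega)) h
        · exact Or.inr ⟨j, hj.1, by omega, hj.2.2⟩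
      · left
        have hk0 : k = 0 := by omega
        subst hk0
        simp [srY]
  rcases key n hn with h | ⟨j, hj⟩
  · exact ⟨n, hn, h⟩
  · exact ⟨j, hj.1, hj.2.2⟩

/-- The map `⟨x, y⟩ ↦ (x, 2y - x)` sends each pair (`i ≥ 2`) of the
strange-root process for `2m` to the corresponding Fagan pair, and
consequently `cf m = sr (2m)`. -/
theorem fagan_eq_strange_root (m : ℕ) (hm : 1 ≤ m) :
    (∀ i, 2 ≤ i → i ≤ sr (2 * m) →
      faganA m i = 2 * srY (2 * m) i - i) ∧ cf m = sr (2 * m) := by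
  set n := 2 * m with hn
  set s := sr n with hsdef
  have hne : ∃ r, r ∈ {r | 1 ≤ r ∧ srY n r ≤ r} := exists_term n (by omega)
  have hmem : s ∈ {r | 1 ≤ r ∧ srY n r ≤ r} := Nat.sInf_mem hne
  have hs1 : 1 ≤ s := hmem.1
  have hss : srY n s ≤ s := hmem.2
  have hs2 : 2 ≤ s := by
    rcases Nat.lt_or_ge s 2 with h | h
    · have hseq : s = 1 := by omega
      rw [hseq] at hss
      have : srY n 1 = n := rfl
      omega
    · exact h
  have hlt : ∀ j, 1 ≤ j → j < s → j < srY n j := by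
    intro j hj1 hj2
    by_contra h
    have : s ≤ j := Nat.sInf_le ⟨hj1, by omega⟩
    omega
  have inv : ∀ i, 2 ≤ i → i ≤ s → faganA m i = 2 * srY n i - i := by
    intro i
    induction i with
    | zero => omega
    | succ k ih =>
      intro h2 hle
      by_cases hk : 2 ≤ k
      · have hks : k < s := by omega
        have hky : k < srY n k := hlt k (by omega) hks
        rw [faganA_succ m k hk, ih hk (by omega), srY_succ n k (by omega)]
        exact step_lemma k (srY n k) hk (le_of_lt hky)
      · have hk1 : k = 1 := by omega
        subst hk1
        have h1 : faganA m 2 = 2 * m := rfl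
        have h2' : srY n 2 = srStep 1 n := rfl
        have h3 : srStep 1 n = 1 * (n + 1) / (1 + 1) + 1 := rfl
        rw [h1, h2', h3]
        omega
  constructor
  · exact inv
  · have hys : srY n s = s := by
      obtain ⟨t, ht⟩ : ∃ t, s = t + 2 := ⟨s - 2, by omega⟩
      rw [ht] at hss ⊢
      have hy : t + 1 < srY n (t + 1) := hlt (t + 1) (by omega) (by omega)
      have hst : srY n (t + 2) = srStep (t + 1) (srY n (t + 1)) := rfl
      have hge := srStep_ge (i := t + 1) (y := srY n (t + 1)) (by omega)
      omega
    have hsf : s ∈ {i | 2 ≤ i ∧ faganA m i ≤ i} := by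
      refine ⟨hs2, ?_⟩
      rw [inv s hs2 le_rfl, hys]
      omega
    have hSf_mem : sInf {i | 2 ≤ i ∧ faganA m i ≤ i} ∈ {i | 2 ≤ i ∧ faganA m i ≤ i} :=
      Nat.sInf_mem ⟨s, hsf⟩
    have h1 : sInf {i | 2 ≤ i ∧ faganA m i ≤ i} ≤ s := Nat.sInf_le hsf
    have h2 : s ≤ sInf {i | 2 ≤ i ∧ faganA m i ≤ i} := by
      by_contra h
      push_neg at h
      have hj1 : 2 ≤ sInf {i | 2 ≤ i ∧ faganA m i ≤ i} := hSf_mem.1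
      have hj2 : faganA m (sInf {i | 2 ≤ i ∧ faganA m i ≤ i})
          ≤ sInf {i | 2 ≤ i ∧ faganA m i ≤ i} := hSf_mem.2
      have hinv := inv _ hj1 (by omega)
      have hbig := hlt _ (by omega) h
      omega
    have hseq : sInf {i | 2 ≤ i ∧ faganA m i ≤ i} = s := le_antisymm h1 h2
    unfold cf
    rw [hseq, inv s hs2 le_rfl, hys]
    omega
end

section
/- Tchouk_n is obtained from Tchouk_{n−1} as follows: if hole i is the leftmost hole of Tchouk_{n−1} containing 0 stones, then Tchouk_n results from Tchouk_{n−1} by placing i stones in hole i and removing one stone from each of holes 1, 2, …, i−1. -/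
/-- A move of Tchoukaillon solitaire: select a hole `i ≥ 1` containing
`0 < c i ≤ i` stones, empty it, and add one stone to each of holes
`i - c i, …, i - 1` (a stone reaching hole `0` goes to the pit and
is not recorded). -/
def TchoukMove (c c' : ℕ → ℕ) : Prop :=
  ∃ i, 1 ≤ i ∧ 0 < c i ∧ c i ≤ i ∧
    ∀ j, c' j = if j = i then 0
      else if 1 ≤ j ∧ i - c i ≤ j ∧ j < i then c j + 1 else c j

/-- A configuration (finitely supported, holes indexed from 1) is winning if
some sequence of moves empties all the holes. -/
def TchoukWinning (c : ℕ → ℕ) : Prop :=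
  c 0 = 0 ∧ (Function.support c).Finite ∧
    Relation.ReflTransGen TchoukMove c (fun _ => 0)

/-- Auxiliary: `(tchoukAux n k).1 = c_k` and `(tchoukAux n k).2 = c_1 + ⋯ + c_k`
where `c_k = (n - (c_1 + ⋯ + c_{k-1})) % (k+1)`. -/
def tchoukAux (n : ℕ) : ℕ → ℕ × ℕ
  | 0 => (0, 0)
  | (k+1) =>
      ((n - (tchoukAux n k).2) % (k + 2),
        (tchoukAux n k).2 + (n - (tchoukAux n k).2) % (k + 2))

/-- `tchouk n k` is the number of stones in hole `k` of the winning
Tchoukaillon configuration `Tchouk_n` (with `tchouk n 0 = 0`). -/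
def tchouk (n k : ℕ) : ℕ := (tchoukAux n k).1

lemma aux2_le (n : ℕ) : ∀ k, (tchoukAux n k).2 ≤ n := by
  intro k
  induction k with
  | zero => simp [tchoukAux]
  | succ k ih =>
    have h := Nat.mod_le (n - (tchoukAux n k).2) (k + 2)
    simp only [tchoukAux]
    omega

lemma mod_helper (b k : ℕ) (h1 : b % (k+2) ≠ 0) :
    (b + (k+1)) % (k+2) = b % (k+2) - 1 := by
  conv_lhs => rw [show b + (k+1) = (k+2) * (b / (k+2)) + (b % (k+2) + (k+1)) by
    have := Nat.mod_add_div b (k+2); omega]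
  rw [Nat.mul_add_mod]
  have h2 : b % (k+2) < k+2 := Nat.mod_lt _ (by omega)
  rw [Nat.mod_eq_sub_mod (by omega), Nat.mod_eq_of_lt (by omega)]
  omega

lemma mod_helper0 (b k : ℕ) (h1 : b % (k+2) = 0) :
    (b + (k+1)) % (k+2) = k+1 := by
  conv_lhs => rw [show b + (k+1) = (k+2) * (b / (k+2)) + (k+1) by
    have := Nat.mod_add_div b (k+2); omega]
  rw [Nat.mul_add_mod, Nat.mod_eq_of_lt (by omega)]

/-- `Tchouk_n` results from `Tchouk_(n-1)` by placing `i` stones in the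
leftmost empty hole `i` and removing one stone from each of holes
`1, …, i-1`. -/
theorem tchouk_recursion (n : ℕ) (hn : 1 ≤ n) (i : ℕ) (hi : 1 ≤ i)
    (h0 : tchouk (n - 1) i = 0)
    (hleft : ∀ j, 1 ≤ j → j < i → tchouk (n - 1) j ≠ 0) :
    ∀ j, tchouk n j =
      if j = i then i
      else if 1 ≤ j ∧ j < i then tchouk (n - 1) j - 1
      else tchouk (n - 1) j := by
  obtain ⟨m, rfl⟩ : ∃ m, n = m + 1 := ⟨n - 1, by omega⟩
  simp only [Nat.add_sub_cancel] at h0 hleft ⊢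
  -- Key invariant for holes left of `i`: partial sums for `m+1` are `k` less.
  have P : ∀ k, k < i → (tchoukAux (m+1) k).2 + k = (tchoukAux m k).2 := by
    intro k
    induction k with
    | zero => intro _; simp [tchoukAux]
    | succ k ih =>
      intro hk
      have hP := ih (by omega)
      have hle := aux2_le m k
      have hle' := aux2_le (m+1) k
      have ha : (m - (tchoukAux m k).2) % (k+2) ≠ 0 := hleft (k+1) (by omega) hk
      have key : (m + 1 - (tchoukAux (m+1) k).2) = (m - (tchoukAux m k).2) + (k+1) := by
        omega
      have halt : (m - (tchoukAux m k).2) % (k+2) < k+2 := Nat.mod_lt _ (by omega)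
      show (tchoukAux (m+1) k).2 + (m + 1 - (tchoukAux (m+1) k).2) % (k+2) + (k+1)
          = (tchoukAux m k).2 + (m - (tchoukAux m k).2) % (k+2)
      rw [key, mod_helper _ _ ha]
      omega
  obtain ⟨p, rfl⟩ : ∃ p, i = p + 1 := ⟨i - 1, by omega⟩
  have hPp := P p (by omega)
  have hlem := aux2_le m p
  have hlen := aux2_le (m+1) p
  have keyp : (m + 1 - (tchoukAux (m+1) p).2) = (m - (tchoukAux m p).2) + (p+1) := by omega
  have h0' : (m - (tchoukAux m p).2) % (p+2) = 0 := h0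
  have hti : tchouk (m+1) (p+1) = p+1 := by
    show (m + 1 - (tchoukAux (m+1) p).2) % (p+2) = p+1
    rw [keyp, mod_helper0 _ _ h0']
  -- Invariant for holes at and beyond `i`.
  have hQ : ∀ k, p + 1 ≤ k → (tchoukAux (m+1) k).2 = (tchoukAux m k).2 + 1 ∧
      (p + 1 < k → tchouk (m+1) k = tchouk m k) := by
    intro k
    induction k with
    | zero => intro h; omega
    | succ k ih =>
      intro hk
      rcases Nat.lt_or_ge k (p+1) with h | h
      · have hkp : k = p := by omega
        subst hkp
        refine ⟨?_, by omega⟩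
        show (tchoukAux (m+1) k).2 + (m + 1 - (tchoukAux (m+1) k).2) % (k+2)
            = (tchoukAux m k).2 + (m - (tchoukAux m k).2) % (k+2) + 1
        rw [keyp, mod_helper0 _ _ h0', h0']
        omega
      · obtain ⟨hS, _⟩ := ih h
        have hlek := aux2_le m k
        have keyk : m + 1 - (tchoukAux (m+1) k).2 = m - (tchoukAux m k).2 := by omega
        constructor
        · show (tchoukAux (m+1) k).2 + (m + 1 - (tchoukAux (m+1) k).2) % (k+2)
              = (tchoukAux m k).2 + (m - (tchoukAux m k).2) % (k+2) + 1
          rw [keyk]; omega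
        · intro _
          show (m + 1 - (tchoukAux (m+1) k).2) % (k+2) = (m - (tchoukAux m k).2) % (k+2)
          rw [keyk]
  intro j
  rcases eq_or_ne j (p+1) with rfl | hne
  · simpa using hti
  · rw [if_neg hne]
    by_cases hj : 1 ≤ j ∧ j < p + 1
    · rw [if_pos hj]
      obtain ⟨q, rfl⟩ : ∃ q, j = q + 1 := ⟨j - 1, by omega⟩
      have hPq := P q (by omega)
      have hleq := aux2_le m q
      have hleq' := aux2_le (m+1) q
      have ha : (m - (tchoukAux m q).2) % (q+2) ≠ 0 := hleft (q+1) (by omega) (by omega)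
      have key : m + 1 - (tchoukAux (m+1) q).2 = (m - (tchoukAux m q).2) + (q+1) := by omega
      show (m + 1 - (tchoukAux (m+1) q).2) % (q+2) = tchouk m (q+1) - 1
      rw [key, mod_helper _ _ ha]
      rfl
    · rw [if_neg hj]
      rcases Nat.eq_zero_or_pos j with rfl | hj1
      · rfl
      · exact (hQ j (by omega)).2 (by omega)
end

section
/- For n ≥ 2, the winning Tchoukaillon configuration Tchouk_{n−1} = (b_1, …, b_ℓ) satisfies ℓ = sr(n) − 1, and b_i = 2i + 1 + i·y_i − (i+1)·y_{i+1} for i = 1, …, sr(n) − 1, where y_1 = n, y_2, …, y_{sr(n)} = sr(n) are the second coordinates of the strange-root process for n. -/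
lemma yge (n : ℕ) (hn : 1 ≤ n) : ∀ k, 1 ≤ k → k ≤ srY n k := by
  intro k
  induction k with
  | zero => omega
  | succ k ih =>
    intro _
    rcases Nat.eq_zero_or_pos k with h | h
    · subst h; simpa [srY] using hn
    · have hy := ih h
      obtain ⟨i, rfl⟩ : ∃ i, k = i + 1 := ⟨k-1, by omega⟩
      show i + 2 ≤ srY n (i + 2)
      have : srY n (i+2) = (i+1) * (srY n (i+1) + 1) / (i+2) + 1 := rfl
      rw [this]
      have h1 : (i+1)*(i+2) ≤ (i+1)*(srY n (i+1) + 1) :=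
        Nat.mul_le_mul_left _ (by omega)
      have h2 : (i+1)*(i+2)/(i+2) ≤ (i+1)*(srY n (i+1)+1)/(i+2) :=
        Nat.div_le_div_right h1
      rw [Nat.mul_div_cancel _ (by omega)] at h2
      omega

lemma inv (n : ℕ) (hn : 2 ≤ n) : ∀ k,
    n - 1 = (tchoukAux (n-1) k).2 + (k+1) * (srY n (k+1) - (k+1)) := by
  intro k
  induction k with
  | zero => simp [tchoukAux, srY]
  | succ k ih =>
    show n - 1 = (tchoukAux (n-1) (k+1)).2 + (k+2) * (srY n (k+2) - (k+2))
    have hy : k+1 ≤ srY n (k+1) := yge n (by omega) (k+1) (by omega)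
    obtain ⟨d, hd⟩ : ∃ d, srY n (k+1) = d + (k+1) := ⟨srY n (k+1) - (k+1), by omega⟩
    have hsub : srY n (k+1) - (k+1) = d := by omega
    rw [hsub] at ih
    have hy2 : srY n (k+2) = (k+1)*(srY n (k+1)+1)/(k+2) + 1 := rfl
    have e1 : (k+1)*(srY n (k+1)+1) = (k+1)*d + (k+1)*(k+2) := by rw [hd]; ring
    have e2 : (k+1)*(srY n (k+1)+1)/(k+2) = (k+1)*d/(k+2) + (k+1) := by
      rw [e1, Nat.add_mul_div_right _ _ (by omega : 0 < k+2)]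
    have e3 : srY n (k+2) - (k+2) = (k+1)*d/(k+2) := by
      rw [hy2, e2]
      generalize (k+1)*d/(k+2) = X
      omega
    have hstep : (tchoukAux (n-1) (k+1)).2
        = (tchoukAux (n-1) k).2 + ((n-1) - (tchoukAux (n-1) k).2) % (k+2) := rfl
    have hR : (n-1) - (tchoukAux (n-1) k).2 = (k+1)*d := by omega
    have hmd := Nat.mod_add_div ((k+1)*d) (k+2)
    rw [hstep, hR, e3]
    obtain ⟨P, hP⟩ : ∃ P, (k+2)*((k+1)*d/(k+2)) = P := ⟨_, rfl⟩
    obtain ⟨r, hr⟩ : ∃ r, ((k+1)*d) % (k+2) = r := ⟨_, rfl⟩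
    rw [hP, hr] at hmd ⊢
    omega

lemma srY_fix (n : ℕ) (hn : 2 ≤ n) (hs2 : 2 ≤ sr n) (hfx : srY n (sr n) = sr n) :
    ∀ k, sr n ≤ k → srY n k = k := by
  intro k hk
  induction k, hk using Nat.le_induction with
  | base => exact hfx
  | succ k hk ih =>
    have hk1 : 1 ≤ k := by omega
    obtain ⟨i, rfl⟩ : ∃ i, k = i + 1 := ⟨k-1, by omega⟩
    show srStep (i+1) (srY n (i+1)) = i+2
    rw [ih]
    show (i+1)*(i+1+1)/(i+1+1) + 1 = i+2
    rw [Nat.mul_div_cancel _ (by omega)]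

lemma sr_mem (n : ℕ) (hn : 2 ≤ n) : 1 ≤ sr n ∧ srY n (sr n) ≤ sr n := by
  have hnn : srY n n ≤ n := by
    have h := inv n hn (n-1)
    rw [show n - 1 + 1 = n by omega] at h
    by_contra hlt
    have : n ≤ n * (srY n n - n) := Nat.le_mul_of_pos_right n (by omega)
    obtain ⟨P, hP⟩ : ∃ P, n * (srY n n - n) = P := ⟨_, rfl⟩
    rw [hP] at h this
    omega
  exact Nat.sInf_mem (⟨n, by omega, hnn⟩ : Set.Nonempty {r | 1 ≤ r ∧ srY n r ≤ r})

/-- `Tchouk_(n-1)` has length `sr n - 1` and its entries are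
`b_i = 2i + 1 + i·y_i - (i+1)·y_(i+1)`. -/
theorem tchouk_of_strange_root (n : ℕ) (hn : 2 ≤ n) :
    (∀ k, sr n ≤ k → tchouk (n - 1) k = 0) ∧
    tchouk (n - 1) (sr n - 1) ≠ 0 ∧
    ∀ i, 1 ≤ i → i ≤ sr n - 1 →
      (tchouk (n - 1) i : ℤ) =
        2 * i + 1 + i * srY n i - (i + 1) * srY n (i + 1) := by
  obtain ⟨hs1, hs2⟩ := sr_mem n hn
  have hsr2 : 2 ≤ sr n := by
    rcases Nat.lt_or_ge (sr n) 2 with h | h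
    · have h1 : sr n = 1 := by omega
      rw [h1] at hs2
      have : srY n 1 = n := rfl
      omega
    · exact h
  have hfx : srY n (sr n) = sr n :=
    le_antisymm hs2 (yge n (by omega) _ (by omega))
  have hfix := srY_fix n hn hsr2 hfx
  have hmin : ∀ k, 1 ≤ k → k < sr n → k < srY n k := by
    intro k hk1 hk2
    have := Nat.notMem_of_lt_sInf (s := {r | 1 ≤ r ∧ srY n r ≤ r}) hk2
    simp only [Set.mem_setOf_eq, not_and, not_le] at this
    exact this hk1
  refine ⟨?_, ?_, ?_⟩
  · -- zero beyond sr
    intro k hk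
    obtain ⟨j, rfl⟩ : ∃ j, k = j + 1 := ⟨k-1, by omega⟩
    have h := inv n hn j
    rw [hfix (j+1) hk, Nat.sub_self, Nat.mul_zero, Nat.add_zero] at h
    show ((n-1) - (tchoukAux (n-1) j).2) % (j+2) = 0
    rw [show (n-1) - (tchoukAux (n-1) j).2 = 0 by omega]
    simp
  · -- nonzero at sr - 1
    obtain ⟨j, hj⟩ : ∃ j, sr n - 1 = j + 1 := ⟨sr n - 2, by omega⟩
    rw [hj]
    have h1 := inv n hn j
    have h2 := inv n hn (j+1)
    have hjlt : j + 1 < sr n := by omega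
    have hylt : j + 1 < srY n (j+1) := hmin (j+1) (by omega) hjlt
    have hP : (j+1) ≤ (j+1) * (srY n (j+1) - (j+1)) :=
      Nat.le_mul_of_pos_right _ (by omega)
    have hje : j + 2 = sr n := by omega
    rw [show j + 1 + 1 = j + 2 from rfl, hje, hfx, Nat.sub_self, Nat.mul_zero,
      Nat.add_zero] at h2
    have hstep : (tchoukAux (n-1) (j+1)).2
        = (tchoukAux (n-1) j).2 + ((n-1) - (tchoukAux (n-1) j).2) % (j+2) := rfl
    rw [hstep] at h2
    show ((n-1) - (tchoukAux (n-1) j).2) % (j+2) ≠ 0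
    obtain ⟨P, hPd⟩ : ∃ P, (j+1) * (srY n (j+1) - (j+1)) = P := ⟨_, rfl⟩
    obtain ⟨c, hcd⟩ : ∃ c, ((n-1) - (tchoukAux (n-1) j).2) % (j+2) = c := ⟨_, rfl⟩
    rw [hPd] at h1 hP
    rw [hcd] at h2 ⊢
    omega
  · -- the formula
    intro i hi1 hi2
    obtain ⟨j, rfl⟩ : ∃ j, i = j + 1 := ⟨i-1, by omega⟩
    have hy1 : j + 1 ≤ srY n (j+1) := yge n (by omega) _ (by omega)
    have hy2' : j + 2 ≤ srY n (j+2) := yge n (by omega) _ (by omega)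
    have h1 := inv n hn j
    have h2 := inv n hn (j+1)
    have hstep : (tchoukAux (n-1) (j+1)).2
        = (tchoukAux (n-1) j).2 + ((n-1) - (tchoukAux (n-1) j).2) % (j+2) := rfl
    rw [hstep] at h2
    have hc : tchouk (n-1) (j+1) = ((n-1) - (tchoukAux (n-1) j).2) % (j+2) := rfl
    obtain ⟨P, hPd⟩ : ∃ P, (j+1) * (srY n (j+1) - (j+1)) = P := ⟨_, rfl⟩
    obtain ⟨Q, hQd⟩ : ∃ Q, (j+2) * (srY n (j+2) - (j+2)) = Q := ⟨_, rfl⟩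
    obtain ⟨c, hcd⟩ : ∃ c, ((n-1) - (tchoukAux (n-1) j).2) % (j+2) = c := ⟨_, rfl⟩
    rw [hPd] at h1
    rw [show j + 1 + 1 = j + 2 from rfl, hQd, hcd] at h2
    rw [hcd] at hc
    have key : c + Q = P := by omega
    have keyZ : (c:ℤ) + Q = P := by exact_mod_cast key
    have hPZ : (P:ℤ) = (j+1) * ((srY n (j+1) : ℤ) - (j+1)) := by
      rw [← hPd, Nat.cast_mul, Nat.cast_sub hy1]
      push_cast
      ring
    have hQZ : (Q:ℤ) = (j+2) * ((srY n (j+2) : ℤ) - (j+2)) := by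
      rw [← hQd, Nat.cast_mul, Nat.cast_sub hy2']
      push_cast
      ring
    rw [hc]
    push_cast
    rw [show ((j:ℤ) + 1 + 1) = (j:ℤ) + 2 by ring]
    have : srY n (j + 1 + 1) = srY n (j+2) := rfl
    rw [this] at *
    linear_combination keyZ + hPZ - hQZ
end
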